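/- Let m, n ∈ ℕ with n ≥ 1, let q_0, …, q_n be pairwise distinct real numbers, and let A ⊆ {0, …, n}^m be a nonempty downward closed set of multi-indices. Then there exists a unique family of polynomials (L_α)_{α ∈ A} with each L_α ∈ Π_A = span{x ↦ x_1^{α_1}⋯x_m^{α_m} : α ∈ A} satisfying the Kronecker property L_α(p_γ) = δ_{α,γ} for all α, γ ∈ A, where p_γ = (q_{γ_1}, …, q_{γ_m}). -/

import Mathlib

/-- The monomial `x ↦ x^α = x_1^{α_1} ⋯ x_m^{α_m}` for a multi-index `α ∈ {0,…,n}^m`. -/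
def monomial (m n : ℕ) (α : Fin m → Fin (n + 1)) : (Fin m → ℝ) → ℝ :=
  fun x => ∏ i, x i ^ (α i : ℕ)

/-- The polynomial space `Π_A`, the span of the monomials with multi-indices in `A`. -/
def polySpace (m n : ℕ) (A : Finset (Fin m → Fin (n + 1))) :
    Submodule ℝ ((Fin m → ℝ) → ℝ) :=
  Submodule.span ℝ (monomial m n '' (A : Set (Fin m → Fin (n + 1))))

/-- The grid node `p_α = (q_{α_1}, …, q_{α_m})`. -/
def gridNode (m n : ℕ) (q : Fin (n + 1) → ℝ) (α : Fin m → Fin (n + 1)) : Fin m → ℝ :=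
  fun i => q (α i)

/-!
Evaluation at the grid nodes is a linear map `Π_A → ℝ^A`, and a unique Lagrange family exists
as soon as it is bijective. The Newton polynomials `N_α(x) = ∏_i ∏_{j < α_i} (x_i - q_j)` lie in
`Π_A` because `A` is downward closed, and `N_α(p_γ)` vanishes unless `α ≤ γ` while `N_α(p_α) ≠ 0`.
This triangular system makes evaluation surjective, and `dim Π_A ≤ |A|` makes it bijective.
-/

open Finset Module

theorem linearIndependent_of_triangular {ι K : Type*} [Ring K] [NoZeroDivisors K]
    [PartialOrder ι] [Fintype ι] {v : ι → ι → K} (hzero : ∀ a b, ¬ a ≤ b → v a b = 0)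
    (hdiag : ∀ a, v a a ≠ 0) : LinearIndependent K v := by
  rw [Fintype.linearIndependent_iff]
  intro g hg
  by_contra! hsupp
  obtain ⟨a, hmin⟩ := exists_minimal_of_wellFoundedLT (fun a => g a ≠ 0) hsupp
  have hsum : ∑ b, g b * v b a = g a * v a a := by
    refine sum_eq_single a (fun b _ hba => ?_) (by simp)
    by_cases hb : g b = 0
    · rw [hb, zero_mul]
    · rw [hzero b a fun hle => hba (le_antisymm hle (hmin.2 hb hle)), mul_zero]
  have hzero_sum : ∑ b, g b * v b a = 0 := by simpa using congrFun hg a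
  exact mul_ne_zero hmin.1 (hdiag a) (hsum.symm.trans hzero_sum)

theorem LinearMap.bijective_of_surjective_of_finrank_le {K V W : Type*} [DivisionRing K]
    [AddCommGroup V] [Module K V] [AddCommGroup W] [Module K W] [FiniteDimensional K V]
    [FiniteDimensional K W] {f : V →ₗ[K] W} (hf : Function.Surjective f)
    (h : finrank K V ≤ finrank K W) : Function.Bijective f :=
  ⟨(injective_iff_surjective_of_finrank_eq_finrank
    (h.antisymm (f.finrank_le_finrank_of_surjective hf))).2 hf, hf⟩

theorem existsUnique_lagrange_of_bijective {K X ι : Type*} [Semiring K] [DecidableEq ι]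
    (S : Submodule K (X → K)) (p : ι → X)
    (h : Function.Bijective ((LinearMap.funLeft K K p).domRestrict S)) :
    ∃! L : ι → X → K, (∀ α, L α ∈ S) ∧ ∀ α γ, L α (p γ) = if α = γ then 1 else 0 := by
  set E := (LinearMap.funLeft K K p).domRestrict S
  have hE : ∀ (f : S) α, (∀ γ, f.1 (p γ) = if α = γ then 1 else 0) ↔ E f = Pi.single α 1 := by
    intro f α
    simp [E, funext_iff, Pi.single_apply, eq_comm]
  choose f hf using fun α => h.2 (Pi.single α 1)
  refine ⟨fun α => f α, ⟨fun α => (f α).2, fun α => (hE _ α).2 (hf α)⟩, ?_⟩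
  rintro L ⟨hLS, hL⟩
  funext α
  exact congrArg Subtype.val (h.1 (((hE ⟨L α, hLS α⟩ α).1 (hL α)).trans (hf α).symm))

open Polynomial in
theorem Polynomial.eval_eq_sum_Iic_fin {R : Type*} [Semiring R] {n : ℕ} {P : R[X]}
    {a : Fin (n + 1)} (h : P.natDegree ≤ a) (t : R) :
    P.eval t = ∑ k ∈ Iic a, P.coeff k * t ^ (k : ℕ) := by
  rw [eval_eq_sum_range' (Nat.lt_succ_of_le h), Nat.range_succ_eq_Iic, ← Fin.map_valEmbedding_Iic,
    sum_map]
  rfl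

instance (m n : ℕ) (A : Finset (Fin m → Fin (n + 1))) :
    FiniteDimensional ℝ (polySpace m n A) :=
  FiniteDimensional.span_of_finite ℝ (A.finite_toSet.image _)

theorem finrank_polySpace_le (m n : ℕ) (A : Finset (Fin m → Fin (n + 1))) :
    finrank ℝ (polySpace m n A) ≤ #A := by
  classical
  rw [polySpace, ← coe_image]
  exact (finrank_span_finset_le_card _).trans card_image_le

theorem prod_sum_pow_mem_polySpace {m n : ℕ} {A : Finset (Fin m → Fin (n + 1))}
    (hA : IsLowerSet (A : Set (Fin m → Fin (n + 1)))) {α : Fin m → Fin (n + 1)} (hα : α ∈ A)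
    (c : Fin m → Fin (n + 1) → ℝ) :
    (fun x => ∏ i, ∑ k ∈ Iic (α i), c i k * x i ^ (k : ℕ)) ∈ polySpace m n A := by
  have hexpand : (fun x => ∏ i, ∑ k ∈ Iic (α i), c i k * x i ^ (k : ℕ)) =
      ∑ β ∈ Fintype.piFinset fun i => Iic (α i), (∏ i, c i (β i)) • monomial m n β := by
    funext x
    simp only [prod_univ_sum, Finset.sum_apply, Pi.smul_apply, smul_eq_mul, monomial,
      prod_mul_distrib]
  rw [hexpand]
  refine Submodule.sum_mem _ fun β hβ => Submodule.smul_mem _ _ (Submodule.subset_span ?_)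
  exact ⟨β, hA (fun i => by simpa using Fintype.mem_piFinset.1 hβ i) hα, rfl⟩

noncomputable def newtonBasis (m n : ℕ) (q : Fin (n + 1) → ℝ) (α : Fin m → Fin (n + 1)) :
    (Fin m → ℝ) → ℝ :=
  fun x => ∏ i, ∏ j ∈ Iio (α i), (x i - q j)

open Polynomial in
theorem newtonBasis_mem_polySpace {m n : ℕ} (q : Fin (n + 1) → ℝ)
    {A : Finset (Fin m → Fin (n + 1))} (hA : IsLowerSet (A : Set (Fin m → Fin (n + 1))))
    {α : Fin m → Fin (n + 1)} (hα : α ∈ A) : newtonBasis m n q α ∈ polySpace m n A := by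
  set P : Fin m → ℝ[X] := fun i => ∏ j ∈ Iio (α i), (X - C (q j))
  have hdeg : ∀ i, (P i).natDegree ≤ α i := fun i => by
    rw [natDegree_finsetProd_X_sub_C_eq_card, Fin.card_Iio]
  convert prod_sum_pow_mem_polySpace hA hα fun i k => (P i).coeff k using 1
  funext x
  refine prod_congr rfl fun i _ => ?_
  rw [← eval_eq_sum_Iic_fin (hdeg i), eval_prod]
  simp

theorem newtonBasis_gridNode_eq_zero {m n : ℕ} (q : Fin (n + 1) → ℝ)
    {α γ : Fin m → Fin (n + 1)} (h : ¬ α ≤ γ) : newtonBasis m n q α (gridNode m n q γ) = 0 := by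
  obtain ⟨i, hi⟩ : ∃ i, γ i < α i := by simpa [Pi.le_def] using h
  exact prod_eq_zero (mem_univ i) (prod_eq_zero (mem_Iio.2 hi) (sub_self _))

theorem newtonBasis_gridNode_self_ne_zero {m n : ℕ} {q : Fin (n + 1) → ℝ}
    (hq : Function.Injective q) (α : Fin m → Fin (n + 1)) :
    newtonBasis m n q α (gridNode m n q α) ≠ 0 :=
  prod_ne_zero_iff.2 fun _ _ => prod_ne_zero_iff.2 fun _ hj =>
    sub_ne_zero.2 (hq.ne (mem_Iio.1 hj).ne')

theorem surjective_eval_gridNode {m n : ℕ} {q : Fin (n + 1) → ℝ} (hq : Function.Injective q)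
    {A : Finset (Fin m → Fin (n + 1))} (hA : IsLowerSet (A : Set (Fin m → Fin (n + 1)))) :
    Function.Surjective ((LinearMap.funLeft ℝ ℝ fun γ : A => gridNode m n q γ).domRestrict
      (polySpace m n A)) := by
  set E := (LinearMap.funLeft ℝ ℝ fun γ : A => gridNode m n q γ).domRestrict (polySpace m n A)
  set v : A → A → ℝ := fun α => E ⟨newtonBasis m n q α, newtonBasis_mem_polySpace q hA α.2⟩
  have hv : LinearIndependent ℝ v :=
    linearIndependent_of_triangular (fun α γ h => newtonBasis_gridNode_eq_zero q h)
      fun α => newtonBasis_gridNode_self_ne_zero hq α.1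
  rw [← LinearMap.range_eq_top, eq_top_iff, ← hv.span_eq_top_of_card_eq_finrank' (by simp),
    Submodule.span_le]
  rintro _ ⟨α, rfl⟩
  exact LinearMap.mem_range_self _ _

theorem exists_unique_lagrange_basis_general (m n : ℕ)
    (q : Fin (n + 1) → ℝ) (hq : Function.Injective q)
    (A : Finset (Fin m → Fin (n + 1)))
    (hdc : ∀ α ∈ A, ∀ β : Fin m → Fin (n + 1), (∀ i, (β i : ℕ) ≤ (α i : ℕ)) → β ∈ A) :
    ∃! L : {α // α ∈ A} → ((Fin m → ℝ) → ℝ),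
      (∀ α : {α // α ∈ A}, L α ∈ polySpace m n A) ∧
      ∀ α γ : {α // α ∈ A},
        L α (gridNode m n q (γ : Fin m → Fin (n + 1))) = if α = γ then (1 : ℝ) else 0 := by
  have hA : IsLowerSet (A : Set (Fin m → Fin (n + 1))) := fun α β hβ hα => hdc α hα β hβ
  apply existsUnique_lagrange_of_bijective
  exact LinearMap.bijective_of_surjective_of_finrank_le (surjective_eval_gridNode hq hA)
    (by simpa using finrank_polySpace_le m n A)

/-- For pairwise distinct nodes `q_0, …, q_n` and a nonempty downward closed set `A` of
multi-indices, there exists a unique family of Lagrange polynomials `(L_α)_{α ∈ A}` in `Π_A`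
with the Kronecker property `L_α(p_γ) = δ_{α,γ}` for all `α, γ ∈ A`. -/
theorem exists_unique_lagrange_basis (m n : ℕ) (hn : 1 ≤ n)
    (q : Fin (n + 1) → ℝ) (hq : Function.Injective q)
    (A : Finset (Fin m → Fin (n + 1))) (hA : A.Nonempty)
    (hdc : ∀ α ∈ A, ∀ β : Fin m → Fin (n + 1), (∀ i, (β i : ℕ) ≤ (α i : ℕ)) → β ∈ A) :
    ∃! L : {α // α ∈ A} → ((Fin m → ℝ) → ℝ),
      (∀ α : {α // α ∈ A}, L α ∈ polySpace m n A) ∧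
      ∀ α γ : {α // α ∈ A},
        L α (gridNode m n q (γ : Fin m → Fin (n + 1))) = if α = γ then (1 : ℝ) else 0 :=
  exists_unique_lagrange_basis_general m n q hq A hdc
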